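/- Stationarity of the Warp-U transition kernel: the Markov transition kernel P consisting of (a) a Metropolis-Hastings step with Gaussian random-walk proposal targeting π, followed by (b) sampling index ψ ~ ϖ(ψ|θ), setting θ* = S_ψ^{-1}(θ − μ_ψ), sampling ψ' ~ ν(ψ'|θ*) ∝ ϖ(ψ'|H_{ψ'}(θ*)) q(H_{ψ'}(θ*)) |det S_{ψ'}|, and setting θ' = S_{ψ'}θ* + μ_{ψ'}, leaves π invariant: ∫ π(θ) P(dθ'|θ) = π(θ'). -/

import Mathlib

/-!
Write `θ* = F_ψ θ = S_ψ⁻¹ (θ - μ_ψ)` and `H_ψ = F_ψ⁻¹`. Pushing `π(θ) ϖ(ψ|θ) dθ` forward along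
`F_ψ` gives the joint density `N_ψ(θ*) ∝ |det S_ψ| ϖ(ψ|H_ψ θ*) q(H_ψ θ*)` of `(ψ, θ*)`, and
`ν(·|θ*) = N_·(θ*) / ∑_j N_j(θ*)` is exactly the conditional law of the index given `θ*`.
Resampling the index from its conditional therefore preserves the joint law, and pulling
`N_ψ'` back along `H_ψ'` and summing over `ψ'` (the `ϖ(·|θ)` sum to one) returns `π`.
Both changes of variables are affine, with Jacobian `|det S_ψ|`.
-/

open MeasureTheory Matrix Real
open scoped ENNReal

variable {X ι : Type*} [MeasurableSpace X]

theorem MeasureTheory.lintegral_comp_eq_mul_of_map_eq_smul {μ : Measure X} {T : X → X} {a : ℝ≥0∞}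
    (hT : Measurable T) (hmap : μ.map T = a • μ) {g : X → ℝ≥0∞} (hg : Measurable g) :
    ∫⁻ θ, g (T θ) ∂μ = a * ∫⁻ θ, g θ ∂μ := by
  rw [← lintegral_map hg hT, hmap, lintegral_smul_measure, smul_eq_mul]

theorem MeasureTheory.mul_lintegral_comp_of_leftInverse {μ : Measure X} {F H : X → X} {a : ℝ≥0∞}
    (hF : Measurable F) (hH : Measurable H) (hmap : μ.map F = a • μ)
    (hHF : Function.LeftInverse H F) {g : X → ℝ≥0∞} (hg : Measurable g) :
    a * ∫⁻ t, g (H t) ∂μ = ∫⁻ θ, g θ ∂μ := by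
  rw [← lintegral_comp_eq_mul_of_map_eq_smul hF hmap (g := fun t => g (H t)) (hg.comp hH)]
  simp only [hHF _]

section Affine

variable {n : Type*} [Fintype n] [DecidableEq n] {S : Matrix n n ℝ}

theorem Matrix.map_volume_inv_mulVec_sub (hS : IsUnit S.det) (m : n → ℝ) :
    volume.map (fun θ => S⁻¹ *ᵥ (θ - m)) = ENNReal.ofReal |S.det| • volume := by
  have hdet_inv : S⁻¹.det = S.det⁻¹ := by rw [det_nonsing_inv, Ring.inverse_eq_inv']
  have hcomp : (fun θ => S⁻¹ *ᵥ (θ - m)) = toLin' S⁻¹ ∘ fun θ => θ + -m := by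
    funext θ; simp [toLin'_apply, sub_eq_add_neg]
  rw [hcomp, ← Measure.map_map (toLin' S⁻¹).continuous_of_finiteDimensional.measurable
      (measurable_add_const _), map_add_right_eq_self,
    Real.map_matrix_volume_pi_eq_smul_volume_pi (by simp [hdet_inv, hS.ne_zero]),
    hdet_inv, inv_inv]

theorem Matrix.mulVec_inv_mulVec_sub_add (hS : IsUnit S.det) (m θ : n → ℝ) :
    S *ᵥ (S⁻¹ *ᵥ (θ - m)) + m = θ := by
  rw [mulVec_mulVec, mul_nonsing_inv _ hS, one_mulVec, sub_add_cancel]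

end Affine

theorem ENNReal.ofReal_sum_mul_ofReal_posterior [Fintype ι] {a w p : ι → ℝ} (ha : ∀ j, 0 ≤ a j)
    (hw : ∀ j, 0 ≤ w j) (hp : ∀ j, 0 ≤ p j) {c : ℝ} (hc : 0 < c) (k : ι) :
    (∑ j, ENNReal.ofReal (a j) * ENNReal.ofReal (w j) * ENNReal.ofReal (p j / c)) *
        ENNReal.ofReal (w k * p k * a k / ∑ j, w j * p j * a j) =
      ENNReal.ofReal (a k) * ENNReal.ofReal (w k) * ENNReal.ofReal (p k / c) := by
  have hN : ∀ j, 0 ≤ w j * p j * a j := fun j => mul_nonneg (mul_nonneg (hw j) (hp j)) (ha j)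
  have hterm : ∀ j, ENNReal.ofReal (a j) * ENNReal.ofReal (w j) * ENNReal.ofReal (p j / c) =
      ENNReal.ofReal (w j * p j * a j / c) := fun j => by
    rw [← ENNReal.ofReal_mul (ha j), ← ENNReal.ofReal_mul (mul_nonneg (ha j) (hw j))]
    congr 1
    ring
  simp only [hterm]
  by_cases hZ : ∑ j, w j * p j * a j = 0
  · have hNk : w k * p k * a k = 0 :=
      (Finset.sum_eq_zero_iff_of_nonneg fun j _ => hN j).mp hZ k (Finset.mem_univ k)
    simp [hZ, hNk]
  · rw [← ENNReal.ofReal_sum_of_nonneg fun j _ => div_nonneg (hN j) hc.le,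
      ← ENNReal.ofReal_mul (Finset.sum_nonneg fun j _ => div_nonneg (hN j) hc.le),
      ← Finset.sum_div]
    congr 1
    field_simp

noncomputable def warpKernel [Fintype ι] (ϖ ν : ι → X → ℝ≥0∞) (F H : ι → X → X) (θ : X) :
    Measure X :=
  Measure.sum fun ψ => Measure.sum fun ψ' =>
    (ϖ ψ θ * ν ψ' (F ψ θ)) • Measure.dirac (H ψ' (F ψ θ))

section Kernel

variable [Fintype ι] {ϖ ν : ι → X → ℝ≥0∞} {F H : ι → X → X}

theorem lintegral_warpKernel {f : X → ℝ≥0∞} (hf : Measurable f) (θ : X) :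
    ∫⁻ x, f x ∂warpKernel ϖ ν F H θ =
      ∑ ψ, ∑ ψ', ϖ ψ θ * ν ψ' (F ψ θ) * f (H ψ' (F ψ θ)) := by
  simp only [warpKernel, lintegral_sum_measure, tsum_fintype, lintegral_smul_measure,
    lintegral_dirac' _ hf, smul_eq_mul]

theorem measurable_warpKernel (hϖ : ∀ k, Measurable (ϖ k)) (hν : ∀ k, Measurable (ν k))
    (hF : ∀ k, Measurable (F k)) (hH : ∀ k, Measurable (H k)) :
    Measurable (warpKernel ϖ ν F H) := by
  refine Measure.measurable_of_measurable_coe _ fun s hs => ?_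
  simp only [warpKernel, Measure.sum_apply _ hs, Measure.smul_apply, Measure.dirac_apply' _ hs,
    smul_eq_mul, tsum_fintype]
  refine Finset.measurable_sum _ fun ψ _ => Finset.measurable_sum _ fun ψ' _ => ?_
  exact ((hϖ ψ).mul ((hν ψ').comp (hF ψ))).mul
    ((measurable_const.indicator hs).comp ((hH ψ').comp (hF ψ)))

end Kernel

section Stationarity

variable {μ : Measure X} {p : X → ℝ≥0∞} {ϖ ν : ι → X → ℝ≥0∞} {F H : ι → X → X} {a : ι → ℝ≥0∞}

theorem lintegral_warp_summand (hp : Measurable p) (hϖ : ∀ k, Measurable (ϖ k))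
    (hν : ∀ k, Measurable (ν k)) (hF : ∀ k, Measurable (F k)) (hH : ∀ k, Measurable (H k))
    (hmap : ∀ k, μ.map (F k) = a k • μ) (hHF : ∀ k, Function.LeftInverse (H k) (F k))
    {f : X → ℝ≥0∞} (hf : Measurable f) (ψ ψ' : ι) :
    ∫⁻ θ, p θ * (ϖ ψ θ * ν ψ' (F ψ θ) * f (H ψ' (F ψ θ))) ∂μ =
      ∫⁻ t, a ψ * ϖ ψ (H ψ t) * p (H ψ t) * (ν ψ' t * f (H ψ' t)) ∂μ := by
  have hG : Measurable fun t => p (H ψ t) * (ϖ ψ (H ψ t) * ν ψ' t * f (H ψ' t)) := by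
    fun_prop
  calc ∫⁻ θ, p θ * (ϖ ψ θ * ν ψ' (F ψ θ) * f (H ψ' (F ψ θ))) ∂μ
      = ∫⁻ θ, p (H ψ (F ψ θ)) * (ϖ ψ (H ψ (F ψ θ)) * ν ψ' (F ψ θ) * f (H ψ' (F ψ θ))) ∂μ := by
        simp only [hHF ψ _]
    _ = a ψ * ∫⁻ t, p (H ψ t) * (ϖ ψ (H ψ t) * ν ψ' t * f (H ψ' t)) ∂μ :=
        lintegral_comp_eq_mul_of_map_eq_smul (hF ψ) (hmap ψ) hG
    _ = _ := by
        rw [← lintegral_const_mul _ hG]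
        congr with t
        ring

theorem withDensity_bind_warpKernel [Fintype ι] (hp : Measurable p) (hϖ : ∀ k, Measurable (ϖ k))
    (hν : ∀ k, Measurable (ν k)) (hF : ∀ k, Measurable (F k)) (hH : ∀ k, Measurable (H k))
    (hmap : ∀ k, μ.map (F k) = a k • μ) (hHF : ∀ k, Function.LeftInverse (H k) (F k))
    (hϖsum : ∀ θ, ∑ k, ϖ k θ = 1)
    (hνpost : ∀ k t, (∑ j, a j * ϖ j (H j t) * p (H j t)) * ν k t =
      a k * ϖ k (H k t) * p (H k t)) :
    (μ.withDensity p).bind (warpKernel ϖ ν F H) = μ.withDensity p := by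
  have hκ := measurable_warpKernel hϖ hν hF hH
  refine Measure.ext_of_lintegral _ fun f hf => ?_
  simp_rw [Measure.lintegral_bind hκ.aemeasurable hf.aemeasurable, lintegral_warpKernel hf]
  rw [lintegral_withDensity_eq_lintegral_mul _ hp (by fun_prop),
    lintegral_withDensity_eq_lintegral_mul _ hp hf]
  simp only [Pi.mul_apply, Finset.mul_sum]
  calc ∫⁻ θ, ∑ ψ, ∑ ψ', p θ * (ϖ ψ θ * ν ψ' (F ψ θ) * f (H ψ' (F ψ θ))) ∂μ
      = ∑ ψ', ∑ ψ, ∫⁻ θ, p θ * (ϖ ψ θ * ν ψ' (F ψ θ) * f (H ψ' (F ψ θ))) ∂μ := by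
        rw [lintegral_finsetSum _ fun ψ _ => by fun_prop, Finset.sum_comm]
        refine Finset.sum_congr rfl fun ψ _ => ?_
        exact lintegral_finsetSum _ fun ψ' _ => by fun_prop
    _ = ∑ ψ', ∫⁻ t, (∑ ψ, a ψ * ϖ ψ (H ψ t) * p (H ψ t)) * (ν ψ' t * f (H ψ' t)) ∂μ := by
        refine Finset.sum_congr rfl fun ψ' _ => ?_
        simp_rw [lintegral_warp_summand hp hϖ hν hF hH hmap hHF hf, Finset.sum_mul]
        exact (lintegral_finsetSum _ fun ψ _ => by fun_prop).symm
    _ = ∑ ψ', ∫⁻ t, a ψ' * (ϖ ψ' (H ψ' t) * (p (H ψ' t) * f (H ψ' t))) ∂μ := by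
        simp_rw [← mul_assoc, hνpost]
    _ = ∑ ψ', ∫⁻ θ, ϖ ψ' θ * (p θ * f θ) ∂μ := by
        refine Finset.sum_congr rfl fun ψ' _ => ?_
        rw [lintegral_const_mul _ (by fun_prop)]
        exact mul_lintegral_comp_of_leftInverse (hF ψ') (hH ψ') (hmap ψ') (hHF ψ')
          (g := fun θ => ϖ ψ' θ * (p θ * f θ)) (by fun_prop)
    _ = ∫⁻ θ, p θ * f θ ∂μ := by
        rw [← lintegral_finsetSum _ fun ψ' _ => by fun_prop]
        simp_rw [← Finset.sum_mul, hϖsum, one_mul]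

end Stationarity

theorem warpU_kernel_stationarity_general
    (d K : ℕ)
    (w : Fin K → ℝ) (hw : ∀ k, 0 ≤ w k)
    (μv : Fin K → (Fin d → ℝ))
    (S : Fin K → Matrix (Fin d) (Fin d) ℝ) (hS : ∀ k, IsUnit (S k).det)
    (φ : (Fin d → ℝ) → ℝ)
    (hφ : φ = fun x => (2 * π) ^ (-(d : ℝ) / 2) * Real.exp (-(∑ i, x i ^ 2) / 2))
    (φcomp : Fin K → (Fin d → ℝ) → ℝ)
    (hφcomp : φcomp = fun k θ => w k * |((S k)⁻¹).det| * φ ((S k)⁻¹.mulVec (θ - μv k)))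
    (φmix : (Fin d → ℝ) → ℝ) (hφmix : φmix = fun θ => ∑ k, φcomp k θ)
    (hφmixpos : ∀ θ, 0 < φmix θ)
    (ϖ : Fin K → (Fin d → ℝ) → ℝ) (hϖ : ϖ = fun k θ => φcomp k θ / φmix θ)
    (q : (Fin d → ℝ) → ℝ) (hq : ∀ θ, 0 ≤ q θ) (hqm : Measurable q)
    (c : ℝ) (hcpos : 0 < c)
    (μπ : Measure (Fin d → ℝ))
    (hμπ : μπ = volume.withDensity fun θ => ENNReal.ofReal (q θ / c))
    (F H : Fin K → (Fin d → ℝ) → (Fin d → ℝ))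
    (hF : F = fun k θ => (S k)⁻¹.mulVec (θ - μv k))
    (hH : H = fun k θs => (S k).mulVec θs + μv k)
    (ν : Fin K → (Fin d → ℝ) → ℝ)
    (hν : ν = fun k θs =>
      (ϖ k (H k θs) * q (H k θs) * |(S k).det|) /
        (∑ j, ϖ j (H j θs) * q (H j θs) * |(S j).det|))
    -- the pure Warp-U move: sample ψ, warp, sample ψ', warp back
    (κ : (Fin d → ℝ) → Measure (Fin d → ℝ))
    (hκ : κ = fun θ => Measure.sum fun ψ : Fin K => Measure.sum fun ψ' : Fin K =>
      (ENNReal.ofReal (ϖ ψ θ * ν ψ' (F ψ θ))) • Measure.dirac (H ψ' (F ψ θ)))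
    -- the Metropolis–Hastings step: a Markov kernel with invariant distribution π
    (PMH : (Fin d → ℝ) → Measure (Fin d → ℝ))
    (hPMHmeas : Measurable PMH)
    (hPMHinv : μπ.bind PMH = μπ) :
    μπ.bind κ = μπ ∧ μπ.bind (fun θ => (PMH θ).bind κ) = μπ := by
  have hφ_cont : Continuous φ := by rw [hφ]; fun_prop
  have hϖ_nonneg : ∀ k θ, 0 ≤ ϖ k θ := fun k θ => by
    have hφ_nonneg : ∀ x, 0 ≤ φ x := fun x => by rw [hφ]; positivity
    rw [hϖ, hφcomp]
    exact div_nonneg (mul_nonneg (mul_nonneg (hw k) (abs_nonneg _)) (hφ_nonneg _)) (hφmixpos θ).le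
  have hϖ_sum : ∀ θ, ∑ k, ϖ k θ = 1 := fun θ => by
    rw [hϖ, ← Finset.sum_div, ← congrFun hφmix θ, div_self (hφmixpos θ).ne']
  have hϖ_meas : ∀ k, Measurable (ϖ k) := by rw [hϖ, hφmix, hφcomp]; fun_prop
  have hF_meas : ∀ k, Measurable (F k) := by rw [hF]; fun_prop
  have hH_meas : ∀ k, Measurable (H k) := by rw [hH]; fun_prop
  have hν_meas : ∀ k, Measurable (ν k) := by rw [hν]; fun_prop
  have hκ_eq : κ = warpKernel (fun k θ => ENNReal.ofReal (ϖ k θ))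
      (fun k t => ENNReal.ofReal (ν k t)) F H := by
    rw [hκ]; funext θ; simp only [warpKernel, ENNReal.ofReal_mul (hϖ_nonneg _ _)]
  have hκ_meas : Measurable κ :=
    hκ_eq ▸ measurable_warpKernel (fun k => by fun_prop) (fun k => by fun_prop) hF_meas hH_meas
  have hbind : μπ.bind κ = μπ := by
    rw [hκ_eq, hμπ]
    refine withDensity_bind_warpKernel (a := fun k => ENNReal.ofReal |(S k).det|) (by fun_prop)
      (fun k => by fun_prop) (fun k => by fun_prop) hF_meas hH_meas
      (fun k => hF ▸ map_volume_inv_mulVec_sub (hS k) (μv k))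
      (fun k θ => by simp only [hF, hH]; exact mulVec_inv_mulVec_sub_add (hS k) _ _)
      (fun θ => by rw [← ENNReal.ofReal_sum_of_nonneg fun k _ => hϖ_nonneg k θ, hϖ_sum,
        ENNReal.ofReal_one]) (fun k t => ?_)
    rw [hν]
    exact ENNReal.ofReal_sum_mul_ofReal_posterior (fun j => abs_nonneg _) (fun j => hϖ_nonneg j _)
      (fun j => hq _) hcpos k
  refine ⟨hbind, ?_⟩
  rw [← Measure.bind_bind hPMHmeas.aemeasurable hκ_meas.aemeasurable, hPMHinv, hbind]

/-- Stationarity of the Warp-U transition kernel: the Markov transition kernel consisting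
of (a) a Metropolis–Hastings step `PMH` targeting `π` (assumed `π`-invariant), followed by
(b) sampling `ψ ~ ϖ(ψ|θ)`, setting `θ* = S_ψ⁻¹(θ − μ_ψ)`, sampling
`ψ' ~ ν(ψ'|θ*) ∝ ϖ(ψ'|H_{ψ'}(θ*)) q(H_{ψ'}(θ*)) |det S_{ψ'}|`, and setting
`θ' = S_{ψ'}θ* + μ_{ψ'}`, leaves `π` invariant.  The claim includes that the pure
warp step (b)–(d), given by the kernel `κ`, preserves `π`. -/
theorem warpU_kernel_stationarity
    (d K : ℕ) (hd : 0 < d) (hK : 0 < K)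
    (w : Fin K → ℝ) (hw : ∀ k, 0 ≤ w k) (hwsum : ∑ k, w k = 1)
    (μv : Fin K → (Fin d → ℝ))
    (S : Fin K → Matrix (Fin d) (Fin d) ℝ) (hS : ∀ k, IsUnit (S k).det)
    (φ : (Fin d → ℝ) → ℝ)
    (hφ : φ = fun x => (2 * π) ^ (-(d : ℝ) / 2) * Real.exp (-(∑ i, x i ^ 2) / 2))
    (φcomp : Fin K → (Fin d → ℝ) → ℝ)
    (hφcomp : φcomp = fun k θ => w k * |((S k)⁻¹).det| * φ ((S k)⁻¹.mulVec (θ - μv k)))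
    (φmix : (Fin d → ℝ) → ℝ) (hφmix : φmix = fun θ => ∑ k, φcomp k θ)
    (hφmixpos : ∀ θ, 0 < φmix θ)
    (ϖ : Fin K → (Fin d → ℝ) → ℝ) (hϖ : ϖ = fun k θ => φcomp k θ / φmix θ)
    (q : (Fin d → ℝ) → ℝ) (hq : ∀ θ, 0 ≤ q θ) (hqm : Measurable q)
    (hqi : Integrable q volume)
    (c : ℝ) (hc : c = ∫ θ, q θ) (hcpos : 0 < c)
    (μπ : Measure (Fin d → ℝ))
    (hμπ : μπ = volume.withDensity fun θ => ENNReal.ofReal (q θ / c))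
    (F H : Fin K → (Fin d → ℝ) → (Fin d → ℝ))
    (hF : F = fun k θ => (S k)⁻¹.mulVec (θ - μv k))
    (hH : H = fun k θs => (S k).mulVec θs + μv k)
    (ν : Fin K → (Fin d → ℝ) → ℝ)
    (hν : ν = fun k θs =>
      (ϖ k (H k θs) * q (H k θs) * |(S k).det|) /
        (∑ j, ϖ j (H j θs) * q (H j θs) * |(S j).det|))
    -- the pure Warp-U move: sample ψ, warp, sample ψ', warp back
    (κ : (Fin d → ℝ) → Measure (Fin d → ℝ))
    (hκ : κ = fun θ => Measure.sum fun ψ : Fin K => Measure.sum fun ψ' : Fin K =>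
      (ENNReal.ofReal (ϖ ψ θ * ν ψ' (F ψ θ))) • Measure.dirac (H ψ' (F ψ θ)))
    -- the Metropolis–Hastings step: a Markov kernel with invariant distribution π
    (PMH : (Fin d → ℝ) → Measure (Fin d → ℝ))
    (hPMHmeas : Measurable PMH)
    (hPMHprob : ∀ θ, IsProbabilityMeasure (PMH θ))
    (hPMHinv : μπ.bind PMH = μπ) :
    μπ.bind κ = μπ ∧ μπ.bind (fun θ => (PMH θ).bind κ) = μπ :=
  warpU_kernel_stationarity_general d K w hw μv S hS φ hφ φcomp hφcomp φmix hφmix hφmixpos ϖ hϖ q hq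
    hqm c hcpos μπ hμπ F H hF hH ν hν κ hκ PMH hPMHmeas hPMHinv
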